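/- arXiv:2406.07907 — 2 statements merged into one kernel-verified Lean document; each statement's English description precedes it below -/
import Mathlib

section
/- Let n ≥ 1 be an integer and for 0 ≤ i ≤ (n+3)/2 define w_i = ((n+2)² - (2n+1)i)/((n+2)(2n+6) - (4n+6)i). Then w_0 = (n+2)/(2n+6), the sequence w_i is strictly increasing in i, and if n is odd then w_{(n+3)/2} = (n+5)/(2n+6). -/
noncomputable def wallOdd (n i : ℕ) : ℚ :=
  (((n : ℚ) + 2) ^ 2 - (2 * n + 1) * i) /
    (((n : ℚ) + 2) * (2 * n + 6) - (4 * n + 6) * i)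

theorem stmt_4 (n : ℕ) (hn : 1 ≤ n) :
    wallOdd n 0 = ((n : ℚ) + 2) / (2 * n + 6) ∧
    (∀ i j : ℕ, i < j → j ≤ (n + 3) / 2 → wallOdd n i < wallOdd n j) ∧
    (Odd n → wallOdd n ((n + 3) / 2) = ((n : ℚ) + 5) / (2 * n + 6)) := by
  have hn' : (1:ℚ) ≤ n := by exact_mod_cast hn
  have hden : ∀ i : ℕ, 2 * i ≤ n + 3 →
      0 < ((n:ℚ) + 2) * (2 * n + 6) - (4 * n + 6) * i := by
    intro i hi
    have hi' : (2:ℚ) * i ≤ (n:ℚ) + 3 := by exact_mod_cast hi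
    nlinarith
  refine ⟨?_, ?_, ?_⟩
  · simp only [wallOdd, Nat.cast_zero, mul_zero, sub_zero]
    rw [pow_two, mul_div_mul_left]
    linarith
  · intro i j hij hj
    have h2j : 2 * j ≤ n + 3 := by omega
    have h2i : 2 * i ≤ n + 3 := by omega
    have hdi := hden i h2i
    have hdj := hden j h2j
    have hij' : (i:ℚ) < j := by exact_mod_cast hij
    unfold wallOdd
    rw [div_lt_div_iff₀ hdi hdj]
    nlinarith [mul_pos (by linarith : (0:ℚ) < (n:ℚ) + 2)
      (by linarith : (0:ℚ) < (j:ℚ) - i)]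
  · rintro ⟨k, hk⟩
    subst hk
    have h : (2 * k + 1 + 3) / 2 = k + 2 := by omega
    rw [h]
    unfold wallOdd
    have h1 := hden (k + 2) (by omega)
    have h2 : (0:ℚ) < 2 * ((2 * k + 1 : ℕ) : ℚ) + 6 := by positivity
    rw [div_eq_div_iff (ne_of_gt h1) (ne_of_gt h2)]
    push_cast
    ring
end

section
/- Let l ≥ 1 be an integer and e an integer with l+2 ≤ e ≤ 2l+3. For a rational number w, the equality (2l + 4 - e - 2w(2l + 3 - e)) = (l + 5/2 - w(2l+3))·(4l + 5 - e)/(3(l+1)) holds if and only if w = w_{2l+3-e}, where w_i = ((2l+2)² - (4l+1)i)/((2l+2)(4l+6) - (8l+6)i). Moreover (l+1)/(2l+3) ≤ w_{2l+3-e} ≤ 1/2. -/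
noncomputable def wallEven (l i : ℕ) : ℚ :=
  ((2 * (l : ℚ) + 2) ^ 2 - (4 * l + 1) * i) /
    ((2 * (l : ℚ) + 2) * (4 * l + 6) - (8 * l + 6) * i)

theorem stmt_8 (l : ℕ) (hl : 1 ≤ l) (e : ℕ)
    (he1 : l + 2 ≤ e) (he2 : e ≤ 2 * l + 3) (w : ℚ) :
    ((2 * (l : ℚ) + 4 - e - 2 * w * (2 * l + 3 - e)
        = ((l : ℚ) + 5 / 2 - w * (2 * l + 3)) * (4 * l + 5 - e) / (3 * (l + 1)))
      ↔ w = wallEven l (2 * l + 3 - e)) ∧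
    ((l : ℚ) + 1) / (2 * l + 3) ≤ wallEven l (2 * l + 3 - e) ∧
    wallEven l (2 * l + 3 - e) ≤ (1 / 2 : ℚ) := by
  have hlq : (1 : ℚ) ≤ l := by exact_mod_cast hl
  have hie : 2 * l + 3 - e + e = 2 * l + 3 := by omega
  have hile : 2 * l + 3 - e ≤ l + 1 := by omega
  set i := 2 * l + 3 - e with hidef
  have hiq : (e : ℚ) = 2 * l + 3 - i := by
    have := congrArg (Nat.cast : ℕ → ℚ) hie
    push_cast at this; linarith
  have hiqle : (i : ℚ) ≤ l + 1 := by exact_mod_cast hile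
  have hi0 : (0 : ℚ) ≤ i := Nat.cast_nonneg _
  have hD : (0 : ℚ) < (2 * (l:ℚ) + 2) * (4 * l + 6) - (8 * l + 6) * i := by nlinarith
  have hl1 : (0 : ℚ) < 3 * ((l:ℚ) + 1) := by linarith
  unfold wallEven
  refine ⟨?_, ?_, ?_⟩
  · rw [hiq, eq_div_iff hD.ne', eq_comm, div_eq_iff hl1.ne']
    constructor
    · intro h; nlinarith [h]
    · intro h; nlinarith [h]
  · rw [div_le_div_iff₀ (by linarith) hD]
    nlinarith
  · rw [div_le_iff₀ hD]
    nlinarith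
end
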